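/- arXiv:1806.06442 — 6 statements merged into one kernel-verified Lean document; each statement's English description precedes it below -/
import Mathlib

section
/- Let X be a normed vector space, f : X → ℝ ∪ {+∞} convex, x ∈ X with f(x) > 0, and τ > 0. If τ · d(x, [f ≤ 0]) ≤ f(x), where [f ≤ 0] := {u ∈ X | f(u) ≤ 0}, then every subgradient x* ∈ ∂f(x) satisfies ‖x*‖ ≥ τ; in particular d(0, ∂f(x)) ≥ τ. -/
open EMetric ENNReal

/-- Convexity for an `EReal`-valued function (modelling `f : X → ℝ ∪ {+∞}`). -/
def EConvexOn {X : Type*} [NormedAddCommGroup X] [NormedSpace ℝ X]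
    (f : X → EReal) : Prop :=
  ∀ u v : X, ∀ t : ℝ, 0 ≤ t → t ≤ 1 →
    f (t • u + (1 - t) • v) ≤ (t : EReal) * f u + ((1 - t : ℝ) : EReal) * f v

/-- The (convex) subdifferential of `f` at `x`:
`x* ∈ ∂f(x)` iff `⟨x*, u − x⟩ ≤ f(u) − f(x)` for all `u`. -/
def ESubdiff {X : Type*} [NormedAddCommGroup X] [NormedSpace ℝ X]
    (f : X → EReal) (x : X) : Set (X →L[ℝ] ℝ) :=
  {g | ∀ u : X, ((g (u - x) : ℝ) : EReal) ≤ f u - f x}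

/-- The "positive part" of an extended real, as an element of `[0, +∞]`. -/
noncomputable def EReal.toENN (a : EReal) : ℝ≥0∞ :=
  if a = ⊤ then ⊤ else ENNReal.ofReal a.toReal

/-! A subgradient `g` at `x` is a supporting slope there: for every `u` with `f u ≤ 0`,
`f x ≤ f x - f u ≤ g (x - u) ≤ ‖g‖ ‖x - u‖`. Taking the infimum over the sublevel set gives
`f x ≤ ‖g‖ · d(x, [f ≤ 0])`, and comparing with `τ · d(x, [f ≤ 0]) ≤ f x` (where `f x > 0`
forces the distance to be nonzero) yields `τ ≤ ‖g‖`. If the sublevel set is empty, its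
distance is `∞`, and `τ · ∞ ≤ f x < ∞` forces `τ ≤ 0`. -/

theorem Metric.le_mul_infEDist {α : Type*} [PseudoEMetricSpace α] {x : α} {s : Set α}
    {b c : ℝ≥0∞} (hb : b ≠ ⊤) (hs : s.Nonempty) (h : ∀ y ∈ s, c ≤ b * edist x y) :
    c ≤ b * Metric.infEDist x s := by
  rcases eq_or_ne b 0 with rfl | hb0
  · obtain ⟨y, hy⟩ := hs
    simpa using h y hy
  rw [Metric.infEDist, ENNReal.mul_iInf_of_ne hb0 hb]
  refine le_iInf fun y => ?_
  rw [ENNReal.mul_iInf_of_ne hb0 hb]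
  exact le_iInf (h y)

section Subdifferential

variable {X : Type*} [NormedAddCommGroup X] [NormedSpace ℝ X] {f : X → EReal} {x : X}
  {g : X →L[ℝ] ℝ}

theorem ne_top_of_mem_ESubdiff (hg : g ∈ ESubdiff f x) : f x ≠ ⊤ := by
  intro htop
  have h := hg x
  rw [htop, EReal.sub_top] at h
  exact EReal.coe_ne_bot _ (le_bot_iff.mp h)

theorem le_opNorm_mul_dist_of_mem_ESubdiff (hg : g ∈ ESubdiff f x) {u : X} (hu : f u ≤ 0) :
    f x ≤ ((‖g‖ * dist x u : ℝ) : EReal) := by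
  have hsub : ((g (u - x) : ℝ) : EReal) ≤ -f x :=
    (hg u).trans <| by simpa using EReal.sub_le_sub hu (le_refl (f x))
  have hslope : f x ≤ ((g (x - u) : ℝ) : EReal) := by
    rw [← neg_sub, map_neg, EReal.coe_neg]
    exact EReal.le_neg_of_le_neg hsub
  refine hslope.trans (EReal.coe_le_coe_iff.mpr ?_)
  rw [dist_eq_norm]
  exact (Real.le_norm_self _).trans (g.le_opNorm _)

theorem toENNReal_le_mul_infEDist_of_mem_ESubdiff (hg : g ∈ ESubdiff f x)
    (hS : {u | f u ≤ 0}.Nonempty) :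
    (f x).toENNReal ≤ ENNReal.ofReal ‖g‖ * Metric.infEDist x {u | f u ≤ 0} := by
  refine Metric.le_mul_infEDist ofReal_ne_top hS fun u hu => ?_
  calc (f x).toENNReal ≤ ((‖g‖ * dist x u : ℝ) : EReal).toENNReal :=
        EReal.toENNReal_le_toENNReal (le_opNorm_mul_dist_of_mem_ESubdiff hg hu)
    _ = ENNReal.ofReal ‖g‖ * edist x u := by
        rw [EReal.real_coe_toENNReal, ENNReal.ofReal_mul (norm_nonneg g), edist_dist]

end Subdifferential

theorem stmt_0_general {X : Type*} [NormedAddCommGroup X] [NormedSpace ℝ X]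
    (f : X → EReal)
    (x : X) (hx : 0 < f x) (τ : ℝ)
    (hEB : ENNReal.ofReal τ * EMetric.infEdist x {u | f u ≤ 0} ≤ (f x).toENN) :
    (∀ g ∈ ESubdiff f x, τ ≤ ‖g‖) ∧
      ENNReal.ofReal τ ≤ ⨅ g ∈ ESubdiff f x, ENNReal.ofReal ‖g‖ := by
  -- `EReal.toENN` is Mathlib's `EReal.toENNReal`, and `EMetric.infEdist` unfolds to `Metric.infEDist`.
  change ENNReal.ofReal τ * Metric.infEDist x {u | f u ≤ 0} ≤ (f x).toENNReal at hEB
  have hofReal_le : ∀ g ∈ ESubdiff f x, ENNReal.ofReal τ ≤ ENNReal.ofReal ‖g‖ := by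
    intro g hg
    have hF0 : (f x).toENNReal ≠ 0 := EReal.toENNReal_ne_zero_iff.mpr hx
    have hFtop : (f x).toENNReal ≠ ⊤ := EReal.toENNReal_ne_top_iff.mpr (ne_top_of_mem_ESubdiff hg)
    rcases {u | f u ≤ 0}.eq_empty_or_nonempty with hS | hS
    · rw [hS, Metric.infEDist_empty] at hEB
      have hτ0 : ENNReal.ofReal τ = 0 := by
        by_contra hτ0
        exact hFtop (top_le_iff.mp (ENNReal.mul_top hτ0 ▸ hEB))
      exact hτ0 ▸ zero_le
    · have hupper := toENNReal_le_mul_infEDist_of_mem_ESubdiff hg hS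
      have hD0 : Metric.infEDist x {u | f u ≤ 0} ≠ 0 := fun h0 => by
        rw [h0, mul_zero] at hupper
        exact hF0 (nonpos_iff_eq_zero.mp hupper)
      exact (ENNReal.mul_le_mul_iff_left hD0 (Metric.infEDist_ne_top hS)).mp (hEB.trans hupper)
  exact ⟨fun g hg => (ENNReal.ofReal_le_ofReal_iff (norm_nonneg g)).mp (hofReal_le g hg), le_iInf₂ hofReal_le⟩

/-- if `f` is convex, `f(x) > 0` and `τ · d(x, [f ≤ 0]) ≤ f(x)`
(with `d(x, ∅) = +∞`), then every subgradient `x* ∈ ∂f(x)` satisfies `‖x*‖ ≥ τ`;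
in particular `d(0, ∂f(x)) ≥ τ`. -/
theorem stmt_0 {X : Type*} [NormedAddCommGroup X] [NormedSpace ℝ X]
    (f : X → EReal) (hbot : ∀ u, f u ≠ ⊥) (hconv : EConvexOn f)
    (x : X) (hx : 0 < f x) (τ : ℝ) (hτ : 0 < τ)
    (hEB : ENNReal.ofReal τ * EMetric.infEdist x {u | f u ≤ 0} ≤ (f x).toENN) :
    (∀ g ∈ ESubdiff f x, τ ≤ ‖g‖) ∧
      ENNReal.ofReal τ ≤ ⨅ g ∈ ESubdiff f x, ENNReal.ofReal ‖g‖ :=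
  stmt_0_general f x hx τ hEB
end

section
/- Let f : ℝ → ℝ ∪ {+∞} be lower semicontinuous, x̄ ∈ [f ≤ 0], and suppose ψ : ℝ → ℝ ∪ {+∞} is differentiable at f(x̄) with ψ′(f(x̄)) > 0 and nondecreasing on [f(x̄), +∞). Then the Fréchet subdifferential satisfies ∂(ψ ∘ f)(x̄) = ψ′(f(x̄)) · ∂f(x̄) (as sets of subgradients scaled by the scalar ψ′(f(x̄))). -/
/-!
For `∂(ψ ∘ f)(x̄) ⊆ c • ∂f(x̄)`: lower semicontinuity keeps `f y` from dropping far below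
`f x̄`, so either `f y` is far above `f x̄` (and the subgradient inequality for `f` is trivial near
`x̄`) or the expansion `ψ (f y) ≈ ψ (f x̄) + c (f y - f x̄)` holds and can be inverted since `c > 0`.

For `c • ∂f(x̄) ⊆ ∂(ψ ∘ f)(x̄)`: the subgradient inequality bounds `f y` below by
`f x̄ + r` with `r = O(‖y - x̄‖)`, and monotonicity of `ψ` on `[f x̄, ∞)` lets us evaluate `ψ` at
`f x̄ + r` (or at `f x̄`) instead of at `f y`, where the expansion of `ψ` applies.
-/

open Set

/-- The Fréchet subdifferential of an `EReal`-valued function: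
`x* ∈ ∂f(x)` iff `liminf_{y→x} (f(y) − f(x) − ⟨x*, y−x⟩)/‖y−x‖ ≥ 0`, i.e.
for every `ε > 0`, `f(y) ≥ f(x) + ⟨x*, y−x⟩ − ε‖y−x‖` for `y` near `x`. -/
def FSubdiff {X : Type*} [NormedAddCommGroup X] [NormedSpace ℝ X]
    (f : X → EReal) (x : X) : Set (X →L[ℝ] ℝ) :=
  {g | ∀ ε : ℝ, 0 < ε → ∃ δ > 0, ∀ y : X, ‖y - x‖ < δ →
      f x + ((g (y - x) - ε * ‖y - x‖ : ℝ) : EReal) ≤ f y}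

/-- Composition `ψ ∘ f` for `f : X → ℝ ∪ {+∞}` and `ψ : ℝ → ℝ`,
extended by `ψ(+∞) = +∞`. -/
noncomputable def compPsi {X : Type*} (ψ : ℝ → ℝ) (f : X → EReal) (x : X) : EReal :=
  if f x = ⊤ then (⊤ : EReal) else ((ψ (f x).toReal : ℝ) : EReal)

open Filter Topology

theorem eventually_mul_norm_sub_lt {E : Type*} [SeminormedAddCommGroup E] (x : E) (C : ℝ)
    {δ : ℝ} (hδ : 0 < δ) : ∀ᶠ y in 𝓝 x, C * ‖y - x‖ < δ := by
  simpa using ((tendsto_norm_sub_self x).const_mul C).eventually_lt_const (by simpa using hδ)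

section Subdifferential

variable {X : Type*} [NormedAddCommGroup X] [NormedSpace ℝ X] {f : X → EReal} {x : X}
  {g : X →L[ℝ] ℝ}

theorem mem_FSubdiff_iff_eventually : g ∈ FSubdiff f x ↔
    ∀ ε > 0, ∀ᶠ y in 𝓝 x, f x + ((g (y - x) - ε * ‖y - x‖ : ℝ) : EReal) ≤ f y := by
  simp only [FSubdiff, mem_ofPred_eq, Metric.eventually_nhds_iff, dist_eq_norm]

theorem mem_FSubdiff_of_eventually_mul (K : ℝ)
    (h : ∀ᶠ ε in 𝓝[>] 0, ∀ᶠ y in 𝓝 x,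
      f x + ((g (y - x) - K * ε * ‖y - x‖ : ℝ) : EReal) ≤ f y) :
    g ∈ FSubdiff f x := by
  refine mem_FSubdiff_iff_eventually.2 fun ε hε => ?_
  have hsmall : ∀ᶠ ε' in 𝓝[>] (0 : ℝ), K * ε' < ε :=
    ((continuous_const_mul K).tendsto' 0 0 (mul_zero K)).mono_left nhdsWithin_le_nhds
      |>.eventually_lt_const hε
  obtain ⟨ε', hε', hKε'⟩ := (h.and hsmall).exists
  filter_upwards [hε'] with y hy
  refine le_trans ?_ hy
  gcongr

theorem abs_apply_sub_mul_norm_le {ε : ℝ} (hε₀ : 0 ≤ ε) (hε₁ : ε ≤ 1) (v : X) :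
    |g v - ε * ‖v‖| ≤ (‖g‖ + 1) * ‖v‖ := by
  have hg : |g v| ≤ ‖g‖ * ‖v‖ := g.le_opNorm v
  have hv := norm_nonneg v
  rw [abs_le] at hg ⊢
  constructor <;> nlinarith

end Subdifferential

theorem compPsi_of_eq_top {X : Type*} (ψ : ℝ → ℝ) {f : X → EReal} {y : X} (hy : f y = ⊤) :
    compPsi ψ f y = ⊤ := if_pos hy

theorem compPsi_of_eq_coe {X : Type*} (ψ : ℝ → ℝ) {f : X → EReal} {y : X} {t : ℝ}
    (hy : f y = t) : compPsi ψ f y = (ψ t : EReal) := by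
  simp [compPsi, hy]

theorem sub_two_mul_abs_le_of_le_add_mul_abs {κ u d : ℝ} (hκ₀ : 0 ≤ κ) (hκ : κ ≤ 1 / 2)
    (h : u ≤ d + κ * |d|) : u - 2 * κ * |u| ≤ d := by
  rcases le_total 0 d with hd | hd <;> rcases le_total 0 u with hu | hu <;>
    simp only [abs_of_nonneg, abs_of_nonpos, *] at h ⊢
  · nlinarith [mul_le_mul_of_nonneg_left h (by linarith : 0 ≤ 1 - 2 * κ),
      mul_nonneg hκ₀ hd, mul_nonneg (mul_nonneg hκ₀ hκ₀) hd]
  · nlinarith [mul_nonneg hκ₀ hd]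
  · nlinarith [mul_nonneg hκ₀ hu]
  · nlinarith [mul_le_mul_of_nonneg_left h (by linarith : 0 ≤ 1 + 2 * κ),
      mul_nonneg (mul_nonneg hκ₀ (by linarith : 0 ≤ 1 - 2 * κ)) (neg_nonneg.2 hd)]

namespace HasDerivAt

variable {ψ : ℝ → ℝ} {c a : ℝ}

theorem exists_abs_sub_le (hψ : HasDerivAt ψ c a) {η : ℝ} (hη : 0 < η) :
    ∃ δ > 0, ∀ t, |t - a| < δ → |ψ t - ψ a - c * (t - a)| ≤ η * |t - a| := by
  obtain ⟨δ, hδ, H⟩ := Metric.eventually_nhds_iff.1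
    (Asymptotics.isLittleO_iff.1 (hasDerivAt_iff_isLittleO.1 hψ) hη)
  refine ⟨δ, hδ, fun t ht => ?_⟩
  simpa [Real.norm_eq_abs, mul_comm] using H (by rwa [Real.dist_eq])

theorem add_mul_sub_abs_le_of_monotoneOn (hψ : HasDerivAt ψ c a) (hc : 0 ≤ c)
    (hmono : MonotoneOn ψ (Ici a)) {η : ℝ} (hη : 0 < η) :
    ∃ δ > 0, ∀ r t, |r| < δ → a + r ≤ t → ψ a + c * r - η * |r| ≤ ψ t := by
  obtain ⟨δ, hδ, hd⟩ := hψ.exists_abs_sub_le hη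
  refine ⟨δ, hδ, fun r t hr hrt => ?_⟩
  rcases le_total 0 r with hr₀ | hr₀
  · have hlin := (abs_le.1 (hd (a + r) (by simpa using hr))).1
    have hmon : ψ (a + r) ≤ ψ t :=
      hmono (by simpa using hr₀) (show a ≤ t by linarith) hrt
    simp only [add_sub_cancel_left, abs_of_nonneg hr₀] at hlin ⊢
    linarith
  rcases le_total a t with hat | hta
  · have hmon : ψ a ≤ ψ t := hmono self_mem_Ici hat hat
    nlinarith [abs_nonneg r]
  · rw [abs_of_nonpos hr₀] at hr ⊢
    have hta' : |t - a| = a - t := by rw [abs_of_nonpos (by linarith)]; ring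
    have hlin := (abs_le.1 (hd t (by rw [hta']; linarith))).1
    rw [hta'] at hlin
    nlinarith

theorem sub_two_mul_abs_le_of_add_mul_le (hψ : HasDerivAt ψ c a) (hc : 0 < c) {ε : ℝ}
    (hε₀ : 0 < ε) (hε : ε ≤ 1 / 2) :
    ∃ δ > 0, ∀ u t, |u| < δ → a - δ < t → ψ a + c * u ≤ ψ t → u - 2 * ε * |u| ≤ t - a := by
  obtain ⟨δ, hδ, hd⟩ := hψ.exists_abs_sub_le (mul_pos hc hε₀)
  refine ⟨δ, hδ, fun u t hu ht hψt => ?_⟩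
  by_cases hfar : δ ≤ t - a
  · nlinarith [le_abs_self u, abs_nonneg u]
  have hlin := (abs_le.1 (hd t (abs_lt.2 ⟨by linarith, by linarith⟩))).2
  refine sub_two_mul_abs_le_of_le_add_mul_abs hε₀.le hε ?_
  have : c * u ≤ c * (t - a + ε * |t - a|) := by linarith
  exact le_of_mul_le_mul_left this hc

end HasDerivAt

section ChainRule

variable {X : Type*} [NormedAddCommGroup X] [NormedSpace ℝ X] {f : X → EReal} {x : X}
  {g : X →L[ℝ] ℝ} {ψ : ℝ → ℝ} {c : ℝ}

theorem smul_mem_FSubdiff_compPsi (hbot : ∀ u, f u ≠ ⊥) (hx : f x ≠ ⊤)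
    (hψ : HasDerivAt ψ c (f x).toReal) (hc : 0 ≤ c) (hmono : MonotoneOn ψ (Ici (f x).toReal))
    (hg : g ∈ FSubdiff f x) : c • g ∈ FSubdiff (compPsi ψ f) x := by
  set a := (f x).toReal
  have hfx : f x = a := (EReal.coe_toReal hx (hbot x)).symm
  refine mem_FSubdiff_of_eventually_mul (c + ‖g‖ + 1) ?_
  filter_upwards [Ioc_mem_nhdsGT one_pos] with ε ⟨hε₀, hε₁⟩
  obtain ⟨δ, hδ, hψδ⟩ := hψ.add_mul_sub_abs_le_of_monotoneOn hc hmono hε₀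
  filter_upwards [mem_FSubdiff_iff_eventually.1 hg ε hε₀,
    eventually_mul_norm_sub_lt x (‖g‖ + 1) hδ] with y hgy hyδ
  by_cases hy : f y = ⊤
  · rw [compPsi_of_eq_top ψ hy]; exact le_top
  set t := (f y).toReal
  have hfy : f y = t := (EReal.coe_toReal hy (hbot y)).symm
  rw [hfx, hfy, ← EReal.coe_add, EReal.coe_le_coe_iff] at hgy
  rw [compPsi_of_eq_coe ψ hfx, compPsi_of_eq_coe ψ hfy, ← EReal.coe_add, EReal.coe_le_coe_iff,
    smul_apply, smul_eq_mul]
  have hr := abs_apply_sub_mul_norm_le (g := g) hε₀.le hε₁ (y - x)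
  have hψt := hψδ _ t (hr.trans_lt hyδ) hgy
  linarith [mul_le_mul_of_nonneg_left hr hε₀.le]

theorem inv_smul_mem_FSubdiff_of_mem_FSubdiff_compPsi (hbot : ∀ u, f u ≠ ⊥) (hx : f x ≠ ⊤)
    (hf : LowerSemicontinuousAt f x) (hψ : HasDerivAt ψ c (f x).toReal) (hc : 0 < c)
    (hg : g ∈ FSubdiff (compPsi ψ f) x) : c⁻¹ • g ∈ FSubdiff f x := by
  set a := (f x).toReal
  have hfx : f x = a := (EReal.coe_toReal hx (hbot x)).symm
  set h := c⁻¹ • g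
  refine mem_FSubdiff_of_eventually_mul (2 * ‖h‖ + 3) ?_
  filter_upwards [Ioc_mem_nhdsGT (by norm_num : (0 : ℝ) < 1 / 2)] with ε ⟨hε₀, hε⟩
  obtain ⟨δ, hδ, hψδ⟩ := hψ.sub_two_mul_abs_le_of_add_mul_le hc hε₀ hε
  have hbelow : ((a - δ : ℝ) : EReal) < f x := by
    rw [hfx, EReal.coe_lt_coe_iff]
    linarith
  filter_upwards [mem_FSubdiff_iff_eventually.1 hg (c * ε) (by positivity), hf _ hbelow,
    eventually_mul_norm_sub_lt x (‖h‖ + 1) hδ] with y hgy hlsc hyδ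
  by_cases hy : f y = ⊤
  · rw [hy]; exact le_top
  set t := (f y).toReal
  have hfy : f y = t := (EReal.coe_toReal hy (hbot y)).symm
  rw [compPsi_of_eq_coe ψ hfx, compPsi_of_eq_coe ψ hfy, ← EReal.coe_add,
    EReal.coe_le_coe_iff] at hgy
  rw [gt_iff_lt, hfy, EReal.coe_lt_coe_iff] at hlsc
  have hgh : g (y - x) = c * h (y - x) := by simp [h, hc.ne']
  have hu := abs_apply_sub_mul_norm_le (g := h) hε₀.le (by linarith) (y - x)
  have hut := hψδ _ t (hu.trans_lt hyδ) hlsc (by rw [hgh] at hgy; linarith)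
  rw [hfx, hfy, ← EReal.coe_add, EReal.coe_le_coe_iff]
  linarith [mul_le_mul_of_nonneg_left hu (by positivity : (0 : ℝ) ≤ 2 * ε)]

end ChainRule

/-- chain rule: if `f` is lsc, `x̄ ∈ [f ≤ 0]`, `ψ` is differentiable
at `f(x̄)` with `ψ'(f(x̄)) > 0` and nondecreasing on `[f(x̄), +∞)`, then
`∂(ψ ∘ f)(x̄) = ψ'(f(x̄)) · ∂f(x̄)`. -/
theorem stmt_2 {X : Type*} [NormedAddCommGroup X] [NormedSpace ℝ X]
    (f : X → EReal) (hbot : ∀ u, f u ≠ ⊥) (hf : LowerSemicontinuous f)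
    (xbar : X) (hxbar : f xbar ≤ 0)
    (ψ : ℝ → ℝ) (c : ℝ) (hψ : HasDerivAt ψ c ((f xbar).toReal)) (hc : 0 < c)
    (hmono : MonotoneOn ψ (Set.Ici ((f xbar).toReal))) :
    FSubdiff (compPsi ψ f) xbar = (fun g : X →L[ℝ] ℝ => c • g) '' FSubdiff f xbar := by
  have hx : f xbar ≠ ⊤ := ne_top_of_le_ne_top EReal.zero_ne_top hxbar
  refine Subset.antisymm (fun g hg => ⟨c⁻¹ • g, ?_, smul_inv_smul₀ hc.ne' g⟩) ?_
  · exact inv_smul_mem_FSubdiff_of_mem_FSubdiff_compPsi hbot hx (hf xbar) hψ hc hg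
  · rintro _ ⟨g, hg, rfl⟩
    exact smul_mem_FSubdiff_compPsi hbot hx hψ hc.le hmono hg
end

section
/- Let X be a Banach space, f : X → ℝ ∪ {+∞} convex lower semicontinuous, and x̄ ∈ [f ≤ 0]. Suppose there exist τ > 0 and δ > 0 such that τ d(x, [f ≤ 0]) ≤ f₊(x) for all x ∈ B_δ(x̄). Then d(0, ∂f(x)) ≥ τ for all x ∈ B_δ(x̄) with f(x) > 0, where ∂f is the convex subdifferential. -/
open EMetric ENNReal

/-- `d(0, ∂f(x)) = inf {‖x*‖ : x* ∈ ∂f(x)}`, `+∞` if `∂f(x) = ∅`. -/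
noncomputable def dSub {X : Type*} [NormedAddCommGroup X] [NormedSpace ℝ X]
    (f : X → EReal) (x : X) : ℝ≥0∞ :=
  ⨅ g ∈ ESubdiff f x, ENNReal.ofReal ‖g‖

/-
A subgradient `g` at a point `x` with `f x = r > 0` gives `r ≤ g (x - u) ≤ ‖g‖ ‖x - u‖` for every
`u ∈ [f ≤ 0]`, hence `r ≤ ‖g‖ d(x, [f ≤ 0])`. Together with the error bound
`τ d(x, [f ≤ 0]) ≤ r` this yields `τ ≤ ‖g‖` after cancelling the distance, which is finite
because `x̄ ∈ [f ≤ 0]` and nonzero because `r > 0`.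
-/

theorem EReal.toENN_coe (r : ℝ) : (r : EReal).toENN = ENNReal.ofReal r := by
  rw [EReal.toENN, if_neg (EReal.coe_ne_top r), EReal.toReal_coe]

section Subgradient

variable {X : Type*} [NormedAddCommGroup X] [NormedSpace ℝ X] {f : X → EReal} {x : X}
  {g : X →L[ℝ] ℝ}

theorem le_norm_mul_dist_of_mem_ESubdiff (hg : g ∈ ESubdiff f x) {r : ℝ} (hfx : f x = r)
    {u : X} (hu : f u ≤ 0) : r ≤ ‖g‖ * dist x u := by
  have hgu : g (u - x) ≤ -r := by
    have h := (hg u).trans (EReal.sub_le_sub hu le_rfl)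
    rwa [hfx, zero_sub, ← EReal.coe_neg, EReal.coe_le_coe_iff] at h
  calc r ≤ g (x - u) := by rw [← neg_sub, map_neg]; linarith
    _ ≤ ‖g‖ * ‖x - u‖ := (le_abs_self _).trans (g.le_opNorm _)
    _ = ‖g‖ * dist x u := by rw [dist_eq_norm]

theorem ofReal_le_norm_mul_infEDist_of_mem_ESubdiff (hg : g ∈ ESubdiff f x) {r : ℝ}
    (hfx : f x = r) (hne : {u | f u ≤ 0}.Nonempty) :
    ENNReal.ofReal r ≤ ENNReal.ofReal ‖g‖ * Metric.infEDist x {u | f u ≤ 0} := by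
  rw [mul_comm]
  refine (ENNReal.div_le_iff_le_mul (Or.inr (Metric.infEDist_ne_top hne))
    (Or.inl ofReal_ne_top)).1 ?_
  refine Metric.le_infEDist.2 fun u hu => ?_
  rw [ENNReal.div_le_iff_le_mul (Or.inr (edist_ne_top x u)) (Or.inl ofReal_ne_top), edist_dist,
    ← ENNReal.ofReal_mul dist_nonneg, mul_comm]
  exact ENNReal.ofReal_le_ofReal (le_norm_mul_dist_of_mem_ESubdiff hg hfx hu)

end Subgradient

theorem stmt_7_general {X : Type*} [NormedAddCommGroup X] [NormedSpace ℝ X]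
    (f : X → EReal)
    (xbar : X) (hxbar : f xbar ≤ 0) (τ δ : ℝ)
    (hEB : ∀ x : X, dist x xbar < δ →
      ENNReal.ofReal τ * EMetric.infEdist x {u | f u ≤ 0} ≤ (f x).toENN) :
    ∀ x : X, dist x xbar < δ → 0 < f x → ENNReal.ofReal τ ≤ dSub f x := by
  intro x hx hfx
  refine le_iInf₂ fun g hg => ?_
  set r := (f x).toReal
  have hfr : f x = r := (EReal.coe_toReal (ne_top_of_mem_ESubdiff hg) (ne_bot_of_gt hfx)).symm
  have hr : 0 < r := by exact_mod_cast hfr ▸ hfx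
  have hne : {u | f u ≤ 0}.Nonempty := ⟨xbar, hxbar⟩
  set D := Metric.infEDist x {u | f u ≤ 0}
  have hD_ne_top : D ≠ ⊤ := Metric.infEDist_ne_top hne
  have upper : ENNReal.ofReal r ≤ ENNReal.ofReal ‖g‖ * D :=
    ofReal_le_norm_mul_infEDist_of_mem_ESubdiff hg hfr hne
  have lower : ENNReal.ofReal τ * D ≤ ENNReal.ofReal r :=
    (hEB x hx).trans_eq (by rw [hfr, EReal.toENN_coe])
  have hD_ne_zero : D ≠ 0 := by
    intro hD
    rw [hD, mul_zero, nonpos_iff_eq_zero, ENNReal.ofReal_eq_zero] at upper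
    linarith
  exact (ENNReal.mul_le_mul_iff_left hD_ne_zero hD_ne_top).1 (lower.trans upper)

/-- if `f` is convex lsc, `x̄ ∈ [f ≤ 0]` and
`τ d(x,[f≤0]) ≤ f₊(x)` on `B_δ(x̄)`, then `d(0,∂f(x)) ≥ τ` for all
`x ∈ B_δ(x̄)` with `f(x) > 0`. -/
theorem stmt_7 {X : Type*} [NormedAddCommGroup X] [NormedSpace ℝ X] [CompleteSpace X]
    (f : X → EReal) (hbot : ∀ u, f u ≠ ⊥) (hconv : EConvexOn f)
    (hlsc : LowerSemicontinuous f)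
    (xbar : X) (hxbar : f xbar ≤ 0) (τ δ : ℝ) (hτ : 0 < τ) (hδ : 0 < δ)
    (hEB : ∀ x : X, dist x xbar < δ →
      ENNReal.ofReal τ * EMetric.infEdist x {u | f u ≤ 0} ≤ (f x).toENN) :
    ∀ x : X, dist x xbar < δ → 0 < f x → ENNReal.ofReal τ ≤ dSub f x :=
  stmt_7_general f xbar hxbar τ δ hEB
end

section
/- With f : ℝ → ℝ as in the lsc step-quadratic example (f = 0 on (−∞,0], f(x) = x² + 1/n − 1/n² on (1/n, 1/(n−1)] for n ≥ 3, f(x) = x² + 1/4 for x > 1/2) and q = 1/2: the quantity d(x, [f ≤ 0])^{q−1} · d(0, ∂f(x))^q equals √2 for all x > 0 with x not a breakpoint 1/(n−1), while along the sequence x_n = 1/(n−1) the quantity f(x_n)^{q−1} · d(0, ∂f(x_n)) tends to 0 as n → ∞. Hence liminf_{x→0, f(x)↓0} d(x,[f≤0])^{q−1} d(0,∂f(x))^q > 0 but liminf_{x→0, f(x)↓0} f(x)^{q−1} d(0,∂f(x)) = 0. -/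
open ENNReal Filter

/-- The Fréchet subdifferential of a real function on `ℝ`. -/
def FSubdiffR (f : ℝ → ℝ) (x : ℝ) : Set ℝ :=
  {g | ∀ ε : ℝ, 0 < ε → ∃ δ > 0, ∀ y : ℝ, |y - x| < δ →
      f x + g * (y - x) - ε * |y - x| ≤ f y}

/-- `d(0, ∂f(x))`, with value `+∞` when `∂f(x) = ∅`. -/
noncomputable def dSubR (f : ℝ → ℝ) (x : ℝ) : ℝ≥0∞ :=
  ⨅ g ∈ FSubdiffR f x, ENNReal.ofReal |g|

/-!
For `x > 0` the function agrees with `y ↦ y ^ 2 + c` just left of `x` and lies above it to the right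
(the offset `f y - y ^ 2` is a nondecreasing step function), so `∂f(x) = [2x, ∞)` and
`d(0, ∂f(x)) = 2x` at every `x > 0`, breakpoints included. As `d(x, [f ≤ 0]) = x`, the first quantity
is `x ^ (-1/2) (2x) ^ (1/2) = √2`. At the breakpoints `xₙ = 1/(n-1)` one has `f(xₙ) > 1/n`, so
`f(xₙ) ^ (-1/2) · 2xₙ ≤ √n · 2/(n-1) ≤ 4/√n → 0`; since `xₙ → 0` and `f(xₙ) ↓ 0`, the second liminf
vanishes.
-/

open Set Topology

section FrechetSubdifferential

variable {f g : ℝ → ℝ} {x a s : ℝ}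

theorem mem_FSubdiffR_of_hasDerivAt (hg : HasDerivAt g a x) (hx : f x = g x)
    (hle : ∀ᶠ y in 𝓝 x, g y ≤ f y) : a ∈ FSubdiffR f x := by
  intro ε hε
  have hlin := (hasDerivAt_iff_isLittleO.1 hg).def hε
  obtain ⟨δ, hδ, hδx⟩ := Metric.eventually_nhds_iff.1 (hle.and hlin)
  refine ⟨δ, hδ, fun y hy => ?_⟩
  obtain ⟨hgf, hrem⟩ := hδx (by rwa [Real.dist_eq])
  simp only [smul_eq_mul, Real.norm_eq_abs] at hrem
  linarith [neg_abs_le (g y - g x - (y - x) * a)]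

theorem le_of_mem_FSubdiffR (hg : HasDerivWithinAt g a (Iio x) x) (hx : f x = g x)
    (hle : ∀ᶠ y in 𝓝[<] x, f y ≤ g y) (hs : s ∈ FSubdiffR f x) : a ≤ s := by
  rw [hasDerivWithinAt_iff_tendsto_slope, sdiff_singleton_eq_self self_notMem_Iio] at hg
  refine le_of_forall_pos_le_add fun ε hε => le_of_tendsto hg ?_
  obtain ⟨δ, hδ, hδx⟩ := hs ε hε
  filter_upwards [hle, Ioo_mem_nhdsLT (sub_lt_self x hδ)] with y hfg ⟨hyδ, hyx⟩
  -- for `y < x` the Fréchet inequality bounds the slope of `f`, hence of `g`, from above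
  have hfy := hδx y (by rw [abs_sub_comm, abs_of_pos (sub_pos.2 hyx)]; linarith)
  rw [abs_of_neg (sub_neg.2 hyx)] at hfy
  rw [slope_def_field, div_le_iff_of_neg (sub_neg.2 hyx)]
  linarith

theorem dSubR_eq_of_hasDerivAt (hg : HasDerivAt g a x) (ha : 0 ≤ a) (hx : f x = g x)
    (hle : ∀ᶠ y in 𝓝 x, g y ≤ f y) (hge : ∀ᶠ y in 𝓝[<] x, f y ≤ g y) :
    dSubR f x = ENNReal.ofReal a := by
  refine le_antisymm ?_ (le_iInf₂ fun s hs => ENNReal.ofReal_le_ofReal ?_)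
  · calc dSubR f x ≤ ENNReal.ofReal |a| := iInf₂_le a (mem_FSubdiffR_of_hasDerivAt hg hx hle)
      _ = ENNReal.ofReal a := by rw [abs_of_nonneg ha]
  · exact (le_of_mem_FSubdiffR hg.hasDerivWithinAt hx hge hs).trans (le_abs_self s)

end FrechetSubdifferential

theorem liminf_eq_zero_of_tendsto_comp {α β : Type*} {u : α → ℝ≥0∞} {l : Filter α}
    {l' : Filter β} [l'.NeBot] {S : β → α} (hS : Tendsto S l' l)
    (hu : Tendsto (u ∘ S) l' (𝓝 0)) : liminf u l = 0 :=
  le_antisymm ((liminf_le_liminf_of_le (u := u) hS).trans_eq (tendsto_map'_iff.2 hu).liminf_eq)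
    bot_le

theorem exists_mem_Ioc_one_div {x : ℝ} (hx0 : 0 < x) (hx : x ≤ 1 / 2) :
    ∃ n : ℕ, 3 ≤ n ∧ 1 / (n : ℝ) < x ∧ x ≤ 1 / ((n : ℝ) - 1) := by
  have h2 : 2 ≤ 1 / x := by rwa [le_one_div (by norm_num) hx0]
  have hfl : 2 ≤ ⌊1 / x⌋₊ := Nat.le_floor (by exact_mod_cast h2)
  have hfl' : (2 : ℝ) ≤ ⌊1 / x⌋₊ := by exact_mod_cast hfl
  refine ⟨⌊1 / x⌋₊ + 1, by omega, ?_, ?_⟩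
  · rw [one_div_lt (by positivity) hx0]
    push_cast
    exact Nat.lt_floor_add_one _
  · push_cast
    rw [add_sub_cancel_right, le_one_div hx0 (by linarith)]
    exact Nat.floor_le (by positivity)

theorem tendsto_one_div_natCast_sub_one :
    Tendsto (fun n : ℕ => 1 / ((n : ℝ) - 1)) atTop (𝓝 0) := by
  have h : Tendsto (fun n : ℕ => (n : ℝ) - 1) atTop atTop :=
    tendsto_atTop_add_const_right _ _ tendsto_natCast_atTop_atTop
  simp only [one_div]
  exact h.inv_tendsto_atTop

theorem ofReal_rpow_half_sub_one_mul_ofReal_two_mul_rpow_half {x : ℝ} (hx : 0 < x) :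
    ENNReal.ofReal x ^ ((1 : ℝ) / 2 - 1) * ENNReal.ofReal (2 * x) ^ ((1 : ℝ) / 2)
      = ENNReal.ofReal √2 := by
  rw [ENNReal.ofReal_rpow_of_pos hx, ENNReal.ofReal_rpow_of_pos (by positivity),
    ← ENNReal.ofReal_mul (by positivity), Real.mul_rpow zero_le_two hx.le, mul_left_comm,
    ← Real.rpow_add hx, Real.sqrt_eq_rpow]
  norm_num

structure IsStepQuadraticOnPos (f : ℝ → ℝ) : Prop where
  eq_on_Ioc : ∀ n : ℕ, 3 ≤ n → ∀ x : ℝ, 1 / (n : ℝ) < x → x ≤ 1 / ((n : ℝ) - 1) →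
    f x = x ^ 2 + 1 / (n : ℝ) - 1 / (n : ℝ) ^ 2
  eq_of_half_lt : ∀ x : ℝ, 1 / 2 < x → f x = x ^ 2 + 1 / 4

namespace IsStepQuadraticOnPos

variable {f : ℝ → ℝ}

theorem sq_add_le (hf : IsStepQuadraticOnPos f) {n : ℕ} (hn : 3 ≤ n) {y : ℝ} (hy : 1 / (n : ℝ) < y) :
    y ^ 2 + (1 / (n : ℝ) - 1 / (n : ℝ) ^ 2) ≤ f y := by
  have hn' : (3 : ℝ) ≤ n := by exact_mod_cast hn
  rw [← one_div_pow]
  rcases le_or_gt y (1 / 2) with hy2 | hy2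
  · obtain ⟨m, hm, hmy, hym⟩ := exists_mem_Ioc_one_div ((by positivity : (0 : ℝ) < 1 / n).trans hy) hy2
    have hm' : (3 : ℝ) ≤ m := by exact_mod_cast hm
    have hmn : (m : ℝ) ≤ n := by
      have : (m : ℝ) - 1 < n := (one_div_lt_one_div (by linarith) (by linarith)).1 (hy.trans_le hym)
      have : m < n + 1 := by exact_mod_cast (by linarith : (m : ℝ) < n + 1)
      exact_mod_cast Nat.lt_add_one_iff.1 this
    have hnm : 1 / (n : ℝ) ≤ 1 / m := one_div_le_one_div_of_le (by linarith) hmn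
    have hm3 : 1 / (m : ℝ) ≤ 1 / 3 := one_div_le_one_div_of_le (by norm_num) hm'
    -- `t ↦ t - t ^ 2` is increasing on `[0, 1/2]`
    rw [hf.eq_on_Ioc m hm y hmy hym, ← one_div_pow]
    nlinarith [mul_nonneg (sub_nonneg.2 hnm) (by linarith : (0 : ℝ) ≤ 1 - 1 / m - 1 / n)]
  · rw [hf.eq_of_half_lt y hy2]
    nlinarith [sq_nonneg (1 / (n : ℝ) - 1 / 2)]

theorem exists_local_sq_add (hf : IsStepQuadraticOnPos f) {x : ℝ} (hx : 0 < x) :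
    ∃ c, f x = x ^ 2 + c ∧ (∀ᶠ y in 𝓝[<] x, f y = y ^ 2 + c) ∧ ∀ y, x < y → y ^ 2 + c ≤ f y := by
  rcases le_or_gt x (1 / 2) with hx2 | hx2
  · obtain ⟨n, hn, hnx, hxn⟩ := exists_mem_Ioc_one_div hx hx2
    refine ⟨1 / (n : ℝ) - 1 / (n : ℝ) ^ 2, by rw [hf.eq_on_Ioc n hn x hnx hxn]; ring, ?_,
      fun y hy => hf.sq_add_le hn (hnx.trans hy)⟩
    filter_upwards [Ioo_mem_nhdsLT hnx] with y ⟨hny, hyx⟩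
    rw [hf.eq_on_Ioc n hn y hny (hyx.le.trans hxn)]
    ring
  · refine ⟨1 / 4, hf.eq_of_half_lt x hx2, ?_,
      fun y hy => (hf.eq_of_half_lt y (hx2.trans hy)).ge⟩
    filter_upwards [Ioo_mem_nhdsLT hx2] with y ⟨hy, _⟩ using hf.eq_of_half_lt y hy

theorem dSubR_eq (hf : IsStepQuadraticOnPos f) {x : ℝ} (hx : 0 < x) :
    dSubR f x = ENNReal.ofReal (2 * x) := by
  obtain ⟨c, hfx, hleft, hright⟩ := hf.exists_local_sq_add hx
  have hderiv : HasDerivAt (fun y => y ^ 2 + c) (2 * x) x := by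
    simpa using (hasDerivAt_pow 2 x).add_const c
  refine dSubR_eq_of_hasDerivAt hderiv (by positivity) hfx ?_ (hleft.mono fun y hy => hy.le)
  rw [← nhdsLT_sup_nhdsGE, eventually_sup]
  refine ⟨hleft.mono fun y hy => hy.ge, ?_⟩
  filter_upwards [self_mem_nhdsWithin] with y (hy : x ≤ y)
  rcases hy.eq_or_lt with rfl | hy
  exacts [hfx.ge, hright y hy]

theorem one_div_lt_apply_one_div_sub_one (hf : IsStepQuadraticOnPos f) {n : ℕ} (hn : 3 ≤ n) :
    1 / (n : ℝ) < f (1 / ((n : ℝ) - 1)) := by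
  have hn' : (3 : ℝ) ≤ n := by exact_mod_cast hn
  have hlt : 1 / (n : ℝ) < 1 / ((n : ℝ) - 1) := one_div_lt_one_div_of_lt (by linarith) (by linarith)
  rw [hf.eq_on_Ioc n hn _ hlt le_rfl, ← one_div_pow]
  nlinarith [pow_lt_pow_left₀ hlt (by positivity) two_ne_zero]

theorem tendsto_apply_one_div_sub_one (hf : IsStepQuadraticOnPos f) :
    Tendsto (fun n : ℕ => f (1 / ((n : ℝ) - 1))) atTop (𝓝 0) := by
  have hinv := tendsto_one_div_atTop_nhds_zero_nat (𝕜 := ℝ)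
  have hlim := ((tendsto_one_div_natCast_sub_one.pow 2).add hinv).sub (hinv.pow 2)
  simp only [ne_eq, OfNat.ofNat_ne_zero, not_false_eq_true, zero_pow, add_zero, sub_zero] at hlim
  refine hlim.congr' ?_
  filter_upwards [eventually_ge_atTop 3] with n hn
  have hn' : (3 : ℝ) ≤ n := by exact_mod_cast hn
  rw [hf.eq_on_Ioc n hn _ (one_div_lt_one_div_of_lt (by linarith) (by linarith)) le_rfl,
    one_div_pow, one_div_pow]

theorem tendsto_rpow_mul_dSubR_one_div_sub_one (hf : IsStepQuadraticOnPos f) :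
    Tendsto (fun n : ℕ => ENNReal.ofReal (f (1 / ((n : ℝ) - 1))) ^ ((1 : ℝ) / 2 - 1) *
      dSubR f (1 / ((n : ℝ) - 1))) atTop (𝓝 0) := by
  have hlim : Tendsto (fun n : ℕ => ENNReal.ofReal (4 / √n)) atTop (𝓝 0) := by
    have h := (Real.tendsto_sqrt_atTop.comp tendsto_natCast_atTop_atTop).inv_tendsto_atTop.const_mul 4
    simpa [div_eq_mul_inv] using ENNReal.tendsto_ofReal h
  refine tendsto_of_tendsto_of_tendsto_of_le_of_le' tendsto_const_nhds hlim
    (.of_forall fun _ => zero_le) ?_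
  filter_upwards [eventually_ge_atTop 3] with n hn
  have hn' : (3 : ℝ) ≤ n := by exact_mod_cast hn
  have hf_gt := hf.one_div_lt_apply_one_div_sub_one hn
  have hfpos : 0 < f (1 / ((n : ℝ) - 1)) := (by positivity : (0 : ℝ) < 1 / n).trans hf_gt
  have hn1 : (0 : ℝ) < n - 1 := by linarith
  rw [hf.dSubR_eq (one_div_pos.2 hn1), ENNReal.ofReal_rpow_of_pos hfpos,
    ← ENNReal.ofReal_mul (by positivity)]
  refine ENNReal.ofReal_le_ofReal ?_
  have hrpow : f (1 / ((n : ℝ) - 1)) ^ ((1 : ℝ) / 2 - 1) ≤ √n :=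
    calc _ ≤ (1 / (n : ℝ)) ^ ((1 : ℝ) / 2 - 1) :=
          Real.rpow_le_rpow_of_nonpos (by positivity) hf_gt.le (by norm_num)
      _ = √n := by
          rw [show (1 : ℝ) / 2 - 1 = -(1 / 2) by norm_num, Real.rpow_neg (by positivity), one_div,
            Real.inv_rpow (by positivity), inv_inv, Real.sqrt_eq_rpow]
  have hsqrt : √(n : ℝ) * √n = n := Real.mul_self_sqrt (by positivity)
  have hs : 0 < √(n : ℝ) := Real.sqrt_pos.2 (by linarith)
  calc f (1 / ((n : ℝ) - 1)) ^ ((1 : ℝ) / 2 - 1) * (2 * (1 / ((n : ℝ) - 1)))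
      ≤ √n * (2 * (1 / ((n : ℝ) - 1))) := mul_le_mul_of_nonneg_right hrpow (by positivity [hn1.le])
    _ ≤ 4 / √n := by
        rw [le_div_iff₀ hs, mul_right_comm, hsqrt, mul_one_div, ← mul_div_assoc, div_le_iff₀ hn1]
        linarith

end IsStepQuadraticOnPos

/-- for the lsc step-quadratic function and `q = 1/2`:
`d(x,[f≤0])^{q−1} d(0,∂f(x))^q = √2` at non-breakpoints `x > 0`;
`f(x_n)^{q−1} d(0,∂f(x_n)) → 0` along the breakpoints `x_n = 1/(n−1)`;
hence (with the liminf taken as `x → 0`, `f(x) > 0`, `f(x) → 0`)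
`liminf d(x,[f≤0])^{q−1} d(0,∂f(x))^q > 0` but `liminf f(x)^{q−1} d(0,∂f(x)) = 0`. -/
theorem stmt_12 (f : ℝ → ℝ)
    (h0 : ∀ x : ℝ, x ≤ 0 → f x = 0)
    (hn : ∀ n : ℕ, 3 ≤ n → ∀ x : ℝ, 1 / (n : ℝ) < x → x ≤ 1 / ((n : ℝ) - 1) →
      f x = x ^ 2 + 1 / (n : ℝ) - 1 / (n : ℝ) ^ 2)
    (htop : ∀ x : ℝ, 1 / 2 < x → f x = x ^ 2 + 1 / 4) :
    (∀ x : ℝ, 0 < x → (∀ n : ℕ, 3 ≤ n → x ≠ 1 / ((n : ℝ) - 1)) →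
      (ENNReal.ofReal x) ^ ((1 : ℝ) / 2 - 1) * (dSubR f x) ^ ((1 : ℝ) / 2)
        = ENNReal.ofReal (Real.sqrt 2)) ∧
    Filter.Tendsto
      (fun n : ℕ => (ENNReal.ofReal (f (1 / ((n : ℝ) - 1)))) ^ ((1 : ℝ) / 2 - 1) *
        dSubR f (1 / ((n : ℝ) - 1))) Filter.atTop (nhds 0) ∧
    0 < Filter.liminf
        (fun x : ℝ => (ENNReal.ofReal x) ^ ((1 : ℝ) / 2 - 1) *
          (dSubR f x) ^ ((1 : ℝ) / 2))
        (nhdsWithin 0 {x : ℝ | 0 < f x} ⊓ Filter.comap f (nhds 0)) ∧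
    Filter.liminf
        (fun x : ℝ => (ENNReal.ofReal (f x)) ^ ((1 : ℝ) / 2 - 1) * dSubR f x)
        (nhdsWithin 0 {x : ℝ | 0 < f x} ⊓ Filter.comap f (nhds 0)) = 0 := by
  have hf : IsStepQuadraticOnPos f := ⟨hn, htop⟩
  have hval (x : ℝ) (hx : 0 < x) :
      ENNReal.ofReal x ^ ((1 : ℝ) / 2 - 1) * dSubR f x ^ ((1 : ℝ) / 2) = ENNReal.ofReal √2 := by
    rw [hf.dSubR_eq hx]
    exact ofReal_rpow_half_sub_one_mul_ofReal_two_mul_rpow_half hx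
  have hpos (x : ℝ) (hfx : 0 < f x) : 0 < x := not_le.1 fun hx => hfx.ne' (h0 x hx)
  have hbreak := hf.tendsto_rpow_mul_dSubR_one_div_sub_one
  refine ⟨fun x hx _ => hval x hx, hbreak, ?_,
    liminf_eq_zero_of_tendsto_comp (S := fun n : ℕ => 1 / ((n : ℝ) - 1)) ?_ hbreak⟩
  · calc (0 : ℝ≥0∞) < ENNReal.ofReal √2 := by simp
      _ ≤ _ := le_liminf_of_le (by isBoundedDefault) <| Eventually.filter_mono inf_le_left <|
          eventually_nhdsWithin_of_forall fun x hx => (hval x (hpos x hx)).ge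
  · refine tendsto_inf.2 ⟨tendsto_nhdsWithin_iff.2 ⟨tendsto_one_div_natCast_sub_one, ?_⟩,
      tendsto_comap_iff.2 hf.tendsto_apply_one_div_sub_one⟩
    filter_upwards [eventually_ge_atTop 3] with n hn
    exact (by positivity : (0 : ℝ) < 1 / n).trans (hf.one_div_lt_apply_one_div_sub_one hn)
end

section
/- Let X be a complete metric space, f : X → ℝ ∪ {+∞} lower semicontinuous and bounded below, and x ∈ X with f(x) > 0 and f(x) < α τ̂ d(x, [f ≤ 0]) for some α ∈ (0,1], τ̂ > 0 (where d(x, ∅) = +∞). Then there exists û ∈ X such that f₊(û) ≤ f(x), ‖û − x‖ < α d(x, [f ≤ 0]), û ∉ [f ≤ 0] (so f(û) > 0), and f₊(û) ≤ f₊(u) + τ̂ d(u, û) for all u ∈ X; moreover, if [f ≤ 0] ≠ ∅ then f(û) ≤ τ̂ d(û, [f ≤ 0]). -/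
/-!
Ekeland's variational principle applied to `f₊` with slope `τ̂`. A point `û` with
`f₊ û ≤ f₊ u + τ̂ d(u, û)` for all `u` is a minimal element of the order
`z ≼ w :↔ f₊ z + τ̂ d(z, w) ≤ f₊ w`. One is found below `x` as the limit of a sequence in which
each term almost minimises `f₊` over the (closed) set of points below the previous one, so these
sets shrink to a point. Since `û ≼ x`, we get `τ̂ d(û, x) ≤ f₊ x < α τ̂ d(x, [f ≤ 0])`, which keeps
`û` outside `[f ≤ 0]`; and since `f₊` vanishes on `[f ≤ 0]`, testing the minimality of `û`
against points of `[f ≤ 0]` gives `f û ≤ τ̂ d(û, [f ≤ 0])`.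
-/

open Metric ENNReal Filter Topology

section Ekeland

variable {X : Type*} [EMetricSpace X] {g : X → ℝ≥0∞} {δ : ℝ≥0∞}

def EkelandLE (g : X → ℝ≥0∞) (δ : ℝ≥0∞) (z w : X) : Prop :=
  g z + δ * edist z w ≤ g w

namespace EkelandLE

theorem refl (w : X) : EkelandLE g δ w w := by
  simp [EkelandLE]

theorem trans {a b c : X} (hab : EkelandLE g δ a b) (hbc : EkelandLE g δ b c) :
    EkelandLE g δ a c :=
  calc g a + δ * edist a c ≤ g a + δ * (edist a b + edist b c) := by
        gcongr; exact edist_triangle a b c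
    _ = (g a + δ * edist a b) + δ * edist b c := by ring
    _ ≤ g b + δ * edist b c := by gcongr; exact hab
    _ ≤ g c := hbc

theorem apply_le {z w : X} (h : EkelandLE g δ z w) : g z ≤ g w :=
  le_self_add.trans h

theorem mul_edist_le {z w v : X} {ε : ℝ≥0∞} (hzw : EkelandLE g δ z w)
    (hz : ∀ v, EkelandLE g δ v w → g z ≤ g v + ε) (hvz : EkelandLE g δ v z)
    (hv : g v ≠ ⊤) :
    δ * edist v z ≤ ε :=
  (ENNReal.add_le_add_iff_left hv).1 (le_trans hvz (hz v (hvz.trans hzw)))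

end EkelandLE

theorem isClosed_setOf_ekelandLE (hg : LowerSemicontinuous g) (hδ : δ ≠ ⊤) (w : X) :
    IsClosed {z | EkelandLE g δ z w} :=
  (hg.add (Continuous.lowerSemicontinuous ((ENNReal.continuous_const_mul hδ).comp
    (continuous_id.edist continuous_const)))).isClosed_preimage (g w)

theorem exists_ekelandLE_forall_le_add (w : X) {ε : ℝ≥0∞} (hε : ε ≠ 0) :
    ∃ z, EkelandLE g δ z w ∧ ∀ v, EkelandLE g δ v w → g z ≤ g v + ε := by
  set m := ⨅ v : {v // EkelandLE g δ v w}, g v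
  by_cases hm : m = ⊤
  · exact ⟨w, .refl w, fun v hv => by simp [iInf_eq_top.1 hm ⟨v, hv⟩]⟩
  · obtain ⟨⟨z, hz⟩, hzm⟩ := iInf_lt_iff.1 (ENNReal.lt_add_right hm hε)
    refine ⟨z, hz, fun v hv => hzm.le.trans ?_⟩
    gcongr
    exact iInf_le (fun v : {v // EkelandLE g δ v w} => g v) ⟨v, hv⟩

theorem exists_seq_ekelandLE (hδ0 : δ ≠ 0) (hδ : δ ≠ ⊤) {x : X} (hx : g x ≠ ⊤) :
    ∃ y : ℕ → X, y 0 = x ∧ (∀ n, EkelandLE g δ (y (n + 1)) (y n)) ∧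
      ∀ n v, EkelandLE g δ v (y (n + 1)) → edist v (y (n + 1)) ≤ 2⁻¹ ^ n := by
  choose step step_le step_min using fun (w : X) (n : ℕ) =>
    exists_ekelandLE_forall_le_add (g := g) (δ := δ) w (ε := δ * 2⁻¹ ^ n) (by simp [hδ0])
  let y : ℕ → X := fun n => Nat.rec x (fun n w => step w n) n
  have hy : ∀ n, EkelandLE g δ (y (n + 1)) (y n) := fun n => step_le (y n) n
  have y_ne_top : ∀ n, g (y n) ≠ ⊤ := by
    intro n
    induction n with
    | zero => exact hx
    | succ n ih => exact ne_top_of_le_ne_top ih (hy n).apply_le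
  refine ⟨y, rfl, hy, fun n v hv => ?_⟩
  have hv_ne_top : g v ≠ ⊤ := ne_top_of_le_ne_top (y_ne_top (n + 1)) hv.apply_le
  exact (ENNReal.mul_le_mul_iff_right hδ0 hδ).1
    ((hy n).mul_edist_le (step_min (y n) n) hv hv_ne_top)

theorem LowerSemicontinuous.exists_ekeland [CompleteSpace X] (hg : LowerSemicontinuous g)
    (hδ0 : δ ≠ 0) (hδ : δ ≠ ⊤) {x : X} (hx : g x ≠ ⊤) :
    ∃ y, EkelandLE g δ y x ∧ ∀ u, g y ≤ g u + δ * edist u y := by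
  obtain ⟨y, rfl, hy, hy_near⟩ := exists_seq_ekelandLE hδ0 hδ hx
  set S : ℕ → Set X := fun n => {z | EkelandLE g δ z (y n)}
  have hS : Antitone S := antitone_nat_of_succ_le fun n _ hz => EkelandLE.trans hz (hy n)
  have hcauchy : CauchySeq fun n => y (n + 1) :=
    cauchySeq_of_edist_le_geometric 2⁻¹ 1 (by norm_num) one_ne_top fun n => by
      rw [one_mul, edist_comm]
      exact hy_near n _ (hy (n + 1))
  obtain ⟨yh, hlim⟩ := cauchySeq_tendsto_of_complete hcauchy
  have hyh : ∀ n, yh ∈ S n := fun n =>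
    (isClosed_setOf_ekelandLE hg hδ (y n)).mem_of_tendsto hlim
      (eventually_atTop.2 ⟨n, fun m hm => hS (hm.trans m.le_succ) (EkelandLE.refl _)⟩)
  refine ⟨yh, hyh 0, fun u => ?_⟩
  by_contra! hu
  have hu_below : ∀ n, EkelandLE g δ u (y (n + 1)) := fun n =>
    EkelandLE.trans hu.le (hyh (n + 1))
  have hlim_u : Tendsto (fun n => y (n + 1)) atTop (𝓝 u) := by
    refine tendsto_iff_edist_tendsto_0.2 (tendsto_of_tendsto_of_tendsto_of_le_of_le
      tendsto_const_nhds (ENNReal.tendsto_pow_atTop_nhds_zero_of_lt_one (r := 2⁻¹) (by norm_num))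
      (fun _ => zero_le) fun n => ?_)
    rw [edist_comm]
    exact hy_near n u (hu_below n)
  rw [tendsto_nhds_unique hlim_u hlim] at hu
  simp at hu

theorem LowerSemicontinuous.exists_ekeland_of_lt_mul_infEDist [CompleteSpace X]
    (hg : LowerSemicontinuous g) (hδ0 : δ ≠ 0) (hδ : δ ≠ ⊤) {a : ℝ≥0∞} (ha : a ≤ 1) {x : X}
    (hx : g x < a * δ * infEDist x {u | g u = 0}) :
    ∃ y, g y ≤ g x ∧ edist y x < a * infEDist x {u | g u = 0} ∧ y ∉ {u | g u = 0} ∧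
      (∀ u, g y ≤ g u + δ * edist u y) ∧ g y ≤ δ * infEDist y {u | g u = 0} := by
  set Z := {u | g u = 0}
  obtain ⟨y, hyx, hy⟩ := hg.exists_ekeland hδ0 hδ hx.ne_top
  have hdist : edist y x < a * infEDist x Z := by
    rw [← ENNReal.mul_lt_mul_iff_right hδ0 hδ]
    calc δ * edist y x ≤ g x := le_add_self.trans hyx
      _ < a * δ * infEDist x Z := hx
      _ = δ * (a * infEDist x Z) := by ring
  have hyZ : y ∉ Z := fun hyZ => (infEDist_le_edist_of_mem hyZ).not_gt <| by
    rw [edist_comm]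
    exact hdist.trans_le (mul_le_of_le_one_left zero_le ha)
  refine ⟨y, hyx.apply_le, hdist, hyZ, hy, ?_⟩
  rw [infEDist, ENNReal.mul_iInf_of_ne hδ0 hδ]
  refine le_iInf fun u => ?_
  rw [ENNReal.mul_iInf_of_ne hδ0 hδ]
  refine le_iInf fun hu => ?_
  simpa [show g u = 0 from hu, edist_comm] using hy u

end Ekeland

theorem stmt_15_general {X : Type*} [MetricSpace X] [CompleteSpace X]
    (f : X → EReal) (hlsc : LowerSemicontinuous f)
    (x : X) (α τ' : ℝ) (hα1 : α ≤ 1) (hτ : 0 < τ')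
    (hx : 0 < f x)
    (hlt : f x <
      ((ENNReal.ofReal α * ENNReal.ofReal τ' *
        EMetric.infEdist x {u | f u ≤ 0} : ℝ≥0∞) : EReal)) :
    ∃ uhat : X,
      max (f uhat) 0 ≤ f x ∧
      edist uhat x < ENNReal.ofReal α * EMetric.infEdist x {u | f u ≤ 0} ∧
      uhat ∉ {u | f u ≤ 0} ∧ 0 < f uhat ∧
      (∀ u : X, max (f uhat) 0 ≤
        max (f u) 0 + ((ENNReal.ofReal τ' * edist u uhat : ℝ≥0∞) : EReal)) ∧
      ({u | f u ≤ 0}.Nonempty →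
        f uhat ≤ ((ENNReal.ofReal τ' *
          EMetric.infEdist uhat {u | f u ≤ 0} : ℝ≥0∞) : EReal)) := by
  set g : X → ℝ≥0∞ := fun u => (f u).toENNReal
  have hg_coe : ∀ u, (g u : EReal) = max (f u) 0 :=
    fun u => EReal.coe_toENNReal_eq_max.trans (max_comm _ _)
  have hgx : (g x : EReal) = f x := EReal.coe_toENNReal hx.le
  have hZ : {u | g u = 0} = {u | f u ≤ 0} := Set.ext fun _ => EReal.toENNReal_eq_zero_iff
  have hg : LowerSemicontinuous g :=
    EReal.continuous_toENNReal.comp_lowerSemicontinuous hlsc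
      fun _ _ => EReal.toENNReal_le_toENNReal
  obtain ⟨y, hyx, hdist, hyZ, hy, hy_inf⟩ := hg.exists_ekeland_of_lt_mul_infEDist
    (ofReal_pos.2 hτ).ne' ofReal_ne_top (ofReal_le_one.2 hα1) (x := x)
    (by rw [hZ, ← EReal.coe_ennreal_lt_coe_ennreal_iff, hgx]; exact hlt)
  rw [hZ] at hdist hyZ hy_inf
  refine ⟨y, ?_, hdist, hyZ, not_le.1 hyZ, fun u => ?_, fun _ => ?_⟩
  · rw [← hg_coe, ← hgx]
    exact_mod_cast hyx
  · rw [← hg_coe, ← hg_coe]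
    exact_mod_cast hy u
  · calc f y ≤ max (f y) 0 := le_max_left _ _
      _ = (g y : EReal) := (hg_coe y).symm
      _ ≤ _ := by exact_mod_cast hy_inf

/-- Ekeland step: `X` complete metric, `f` lsc bounded below,
`0 < f(x) < α τ̂ d(x,[f≤0])` (with `d(x,∅) = +∞`). Then there is `û` with
`f₊(û) ≤ f(x)`, `d(û,x) < α d(x,[f≤0])`, `û ∉ [f≤0]` (so `f(û) > 0`),
`f₊(û) ≤ f₊(u) + τ̂ d(u,û)` for all `u`, and `f(û) ≤ τ̂ d(û,[f≤0])` if `[f≤0] ≠ ∅`. -/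
theorem stmt_15 {X : Type*} [MetricSpace X] [CompleteSpace X]
    (f : X → EReal) (hbot : ∀ u, f u ≠ ⊥) (hlsc : LowerSemicontinuous f)
    (hbdd : ∃ m : ℝ, ∀ u, (m : EReal) ≤ f u)
    (x : X) (α τ' : ℝ) (hα0 : 0 < α) (hα1 : α ≤ 1) (hτ : 0 < τ')
    (hx : 0 < f x)
    (hlt : f x <
      ((ENNReal.ofReal α * ENNReal.ofReal τ' *
        EMetric.infEdist x {u | f u ≤ 0} : ℝ≥0∞) : EReal)) :
    ∃ uhat : X,
      max (f uhat) 0 ≤ f x ∧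
      edist uhat x < ENNReal.ofReal α * EMetric.infEdist x {u | f u ≤ 0} ∧
      uhat ∉ {u | f u ≤ 0} ∧ 0 < f uhat ∧
      (∀ u : X, max (f uhat) 0 ≤
        max (f u) 0 + ((ENNReal.ofReal τ' * edist u uhat : ℝ≥0∞) : EReal)) ∧
      ({u | f u ≤ 0}.Nonempty →
        f uhat ≤ ((ENNReal.ofReal τ' *
          EMetric.infEdist uhat {u | f u ≤ 0} : ℝ≥0∞) : EReal)) :=
  stmt_15_general f hlsc x α τ' hα1 hτ hx hlt
end

section
/- Let X be a Banach space, f : X → ℝ ∪ {+∞} convex lower semicontinuous, x̄ ∈ [f ≤ 0], τ > 0 and δ ∈ (0, ∞]. If d(0, ∂f(x)) ≥ τ for all x ∈ B_δ(x̄) with f(x) > 0 and f(x) < τ d(x, [f ≤ 0]), then for every α ∈ (0,1] and every x ∈ B_{δ/(1+α)}(x̄) one has α τ d(x, [f ≤ 0]) ≤ f₊(x). -/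
/-!
Suppose `α τ d(x, [f ≤ 0]) > f₊(x)` and pick `c < τ` with `f₊(x) < c α d(x, [f ≤ 0])`.
Ekeland's variational principle for the lower semicontinuous function `f₊` yields `y` with
`f₊(y) + c ‖y - x‖ ≤ f₊(x)` at which `f₊ + c ‖· - y‖` is minimal. Then `‖y - x‖ < α d(x, [f ≤ 0])`,
so `y ∈ B_δ(x̄)`, and `f₊(y) < c d(y, [f ≤ 0])`, so `0 < f(y) < τ d(y, [f ≤ 0])`. Since `f(y) > 0`,
convexity upgrades the minimality to that of `f + c ‖· - y‖`, and separating the epigraph of `f`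
from the open cone below `f(y) - c ‖· - y‖` produces a subgradient of norm at most `c < τ`,
contradicting the hypothesis at `y`.
-/

open EMetric ENNReal

open Filter Topology Metric

theorem exists_iInter_eq_singleton_of_tendsto_ediam {Y : Type*} [EMetricSpace Y]
    [CompleteSpace Y] {D : ℕ → Set Y} (hclosed : ∀ n, IsClosed (D n)) (hanti : Antitone D)
    (hne : ∀ n, (D n).Nonempty) (hdiam : Tendsto (fun n => ediam (D n)) atTop (𝓝 0)) :
    ∃ y, ⋂ n, D n = {y} := by
  choose x hx using hne
  have hcauchy : CauchySeq x := EMetric.cauchySeq_iff_le_tendsto_0.2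
    ⟨fun N => ediam (D N), fun n m N hn hm =>
      edist_le_ediam_of_mem (hanti hn (hx n)) (hanti hm (hx m)), hdiam⟩
  obtain ⟨y, hy⟩ := cauchySeq_tendsto_of_complete hcauchy
  have hyD : ∀ n, y ∈ D n := fun n => (hclosed n).mem_of_tendsto hy
    (eventually_atTop.2 ⟨n, fun m hm => hanti hm (hx m)⟩)
  refine ⟨y, Set.eq_singleton_iff_unique_mem.2 ⟨Set.mem_iInter.2 hyD, fun w hw => ?_⟩⟩
  have hwy : edist w y ≤ 0 := ge_of_tendsto' hdiam fun n =>
    edist_le_ediam_of_mem (Set.mem_iInter.1 hw n) (hyD n)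
  exact edist_le_zero.1 hwy

theorem ENNReal.exists_mem_forall_le_add {Y : Type*} {s : Set Y} (hs : s.Nonempty)
    (G : Y → ℝ≥0∞) {ε : ℝ≥0∞} (hε : ε ≠ 0) : ∃ u ∈ s, ∀ w ∈ s, G u ≤ G w + ε := by
  by_cases htop : sInf (G '' s) = ⊤
  · obtain ⟨u, hu⟩ := hs
    refine ⟨u, hu, fun w hw => ?_⟩
    rw [sInf_eq_top.1 htop _ (Set.mem_image_of_mem G hw), top_add]
    exact le_top
  · obtain ⟨_, ⟨u, hu, rfl⟩, hlt⟩ := sInf_lt_iff.1 (ENNReal.lt_add_right htop hε)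
    exact ⟨u, hu, fun w hw =>
      hlt.le.trans (add_le_add_left (sInf_le (Set.mem_image_of_mem G hw)) _)⟩

theorem ENNReal.exists_lt_and_lt_mul {a b K : ℝ≥0∞} (h : a < b * K) (hK0 : K ≠ 0)
    (hK : K ≠ ⊤) : ∃ c < b, a < c * K := by
  obtain ⟨c, hac, hcb⟩ := exists_between ((ENNReal.div_lt_iff (Or.inl hK0) (Or.inl hK)).2 h)
  exact ⟨c, hcb, (ENNReal.div_lt_iff (Or.inl hK0) (Or.inl hK)).1 hac⟩

section Ekeland

variable {Y : Type*} [EMetricSpace Y] {G : Y → ℝ≥0∞} {c : ℝ≥0∞}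

def ekelandSet (G : Y → ℝ≥0∞) (c : ℝ≥0∞) (z : Y) : Set Y :=
  {u | G u + c * edist u z ≤ G z}

theorem self_mem_ekelandSet (z : Y) : z ∈ ekelandSet G c z := by
  simp [ekelandSet]

theorem le_of_mem_ekelandSet {u z : Y} (hu : u ∈ ekelandSet G c z) : G u ≤ G z :=
  le_self_add.trans hu

theorem ekelandSet_subset {u z : Y} (hu : u ∈ ekelandSet G c z) :
    ekelandSet G c u ⊆ ekelandSet G c z := fun w (hw : G w + c * edist w u ≤ G u) =>
  calc G w + c * edist w z ≤ G w + c * (edist w u + edist u z) := by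
        gcongr; exact edist_triangle _ _ _
    _ = G w + c * edist w u + c * edist u z := by ring
    _ ≤ G u + c * edist u z := by gcongr
    _ ≤ G z := hu

theorem isClosed_ekelandSet (hG : LowerSemicontinuous G) (hc : c ≠ ⊤) (z : Y) :
    IsClosed (ekelandSet G c z) :=
  (hG.add ((ENNReal.continuous_const_mul hc).comp
    (continuous_id.edist continuous_const)).lowerSemicontinuous).isClosed_preimage (G z)

theorem ediam_ekelandSet_le {u z : Y} {ε : ℝ≥0∞} (hz : G z ≠ ⊤) (hc : c ≠ 0) (hc' : c ≠ ⊤)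
    (hu : u ∈ ekelandSet G c z) (hmin : ∀ w ∈ ekelandSet G c z, G u ≤ G w + ε) :
    ediam (ekelandSet G c u) ≤ 2 * (ε / c) := by
  have hclose : ∀ w ∈ ekelandSet G c u, edist w u ≤ ε / c := by
    intro w (hw : G w + c * edist w u ≤ G u)
    have hwz : w ∈ ekelandSet G c z := ekelandSet_subset hu hw
    have hGw : G w ≠ ⊤ := ne_top_of_le_ne_top hz (le_of_mem_ekelandSet hwz)
    rw [ENNReal.le_div_iff_mul_le (Or.inl hc) (Or.inl hc'), mul_comm]
    exact (ENNReal.add_le_add_iff_left hGw).1 (hw.trans (hmin w hwz))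
  refine ediam_le fun w hw w' hw' => ?_
  calc edist w w' ≤ edist w u + edist w' u := edist_triangle_right _ _ _
    _ ≤ ε / c + ε / c := add_le_add (hclose w hw) (hclose w' hw')
    _ = 2 * (ε / c) := (two_mul _).symm

theorem LowerSemicontinuous.ekeland [CompleteSpace Y] (hG : LowerSemicontinuous G) {x₀ : Y}
    (h₀ : G x₀ ≠ ⊤) (hc : c ≠ 0) (hc' : c ≠ ⊤) :
    ∃ y, G y + c * edist y x₀ ≤ G x₀ ∧ ∀ u, G y ≤ G u + c * edist u y := by
  -- `x (n + 1)` minimizes `G` on `ekelandSet G c (x n)` up to `2⁻ⁿ`.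
  choose! next hnext_mem hnext using fun z (n : ℕ) =>
    ENNReal.exists_mem_forall_le_add ⟨z, self_mem_ekelandSet (G := G) (c := c) z⟩ G
      (pow_ne_zero n (ENNReal.inv_ne_zero.2 ofNat_ne_top) : (2⁻¹ : ℝ≥0∞) ^ n ≠ 0)
  let x : ℕ → Y := fun n => Nat.rec x₀ (fun n z => next z n) n
  have hanti : Antitone fun n => ekelandSet G c (x n) :=
    antitone_nat_of_succ_le fun n => ekelandSet_subset (hnext_mem (x n) n)
  have hfin : ∀ n, G (x n) ≠ ⊤ := fun n => ne_top_of_le_ne_top h₀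
    (le_of_mem_ekelandSet (hanti (Nat.zero_le n) (self_mem_ekelandSet _)))
  have hdiam : Tendsto (fun n => ediam (ekelandSet G c (x (n + 1)))) atTop (𝓝 0) := by
    have hlim : Tendsto (fun n : ℕ => 2 * ((2⁻¹ : ℝ≥0∞) ^ n / c)) atTop (𝓝 0) := by
      simpa using ENNReal.Tendsto.const_mul (ENNReal.Tendsto.div_const
        (ENNReal.tendsto_pow_atTop_nhds_zero_of_lt_one (by norm_num)) (Or.inr hc))
        (Or.inr ofNat_ne_top)
    exact tendsto_of_tendsto_of_tendsto_of_le_of_le tendsto_const_nhds hlim (fun _ => zero_le)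
      fun n => ediam_ekelandSet_le (hfin n) hc hc' (hnext_mem _ n) (hnext _ n)
  obtain ⟨y, hy⟩ := exists_iInter_eq_singleton_of_tendsto_ediam
    (fun n => isClosed_ekelandSet hG hc' (x (n + 1))) (fun _ _ h => hanti (Nat.succ_le_succ h))
    (fun n => ⟨_, self_mem_ekelandSet _⟩) hdiam
  have hyx : ∀ n, y ∈ ekelandSet G c (x (n + 1)) :=
    Set.mem_iInter.1 (hy ▸ Set.mem_singleton y)
  refine ⟨y, hanti (Nat.zero_le 1) (hyx 0), fun u => ?_⟩
  by_contra! hu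
  have hu_mem : u ∈ ⋂ n, ekelandSet G c (x (n + 1)) :=
    Set.mem_iInter.2 fun n => ekelandSet_subset (hyx n) hu.le
  rw [hy, Set.mem_singleton_iff] at hu_mem
  simp [hu_mem] at hu

end Ekeland

theorem lt_mul_infEDist_of_add_mul_edist_le {Y : Type*} [PseudoEMetricSpace Y]
    {G : Y → ℝ≥0∞} {S : Set Y} {c : ℝ≥0∞} {x y : Y} (hdesc : G y + c * edist y x ≤ G x)
    (hx : G x < c * infEDist x S) : G y < c * infEDist y S := by
  have hfin : c * edist y x ≠ ⊤ :=
    ne_top_of_le_ne_top (ne_top_of_lt hx) (le_add_self.trans hdesc)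
  refine (ENNReal.add_lt_add_iff_right hfin).1 ?_
  calc G y + c * edist y x ≤ G x := hdesc
    _ < c * infEDist x S := hx
    _ ≤ c * (infEDist y S + edist x y) := by gcongr; exact infEDist_le_infEDist_add_edist
    _ = c * infEDist y S + c * edist y x := by rw [mul_add, edist_comm]

section ConvexOn

variable {E : Type*} [NormedAddCommGroup E] [NormedSpace ℝ E] {s : Set E} {φ : E → ℝ} {y : E}
  {μ : ℝ}

theorem ConvexOn.exists_clm_norm_le_of_le_add_mul_dist (hφ : ConvexOn ℝ s φ) (hy : y ∈ s)
    (hμ : 0 ≤ μ) (hmin : ∀ u ∈ s, φ y ≤ φ u + μ * dist u y) :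
    ∃ g : E →L[ℝ] ℝ, ‖g‖ ≤ μ ∧ ∀ u ∈ s, g (u - y) ≤ φ u - φ y := by
  let cone : E → ℝ := fun v => φ y - μ * dist v y
  have hcone : ConcaveOn ℝ Set.univ cone :=
    (concaveOn_const _ convex_univ).sub ((convexOn_univ_dist y).smul hμ)
  have hB : Convex ℝ {p : E × ℝ | p.1 ∈ Set.univ ∧ p.2 < cone p.1} :=
    hcone.convex_strict_hypograph
  have hBo : IsOpen {p : E × ℝ | p.1 ∈ Set.univ ∧ p.2 < cone p.1} := by
    simp only [Set.mem_univ, true_and]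
    exact isOpen_lt continuous_snd (by fun_prop)
  have hdisj : Disjoint {p : E × ℝ | p.1 ∈ Set.univ ∧ p.2 < cone p.1}
      {p : E × ℝ | p.1 ∈ s ∧ φ p.1 ≤ p.2} :=
    Set.disjoint_left.2 fun p hpB hpA => by
      have := hmin p.1 hpA.1
      simp only [cone, Set.mem_ofPred_eq] at hpB hpA
      linarith [hpB.2, hpA.2]
  obtain ⟨L, c, hLB, hLA⟩ := geometric_hahn_banach_open hB hBo hφ.convex_epigraph hdisj
  have key : ∀ v t, t < cone v → ∀ u ∈ s, L (v, t) < L (u, φ u) := fun v t ht u hu =>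
    (hLB (v, t) ⟨trivial, ht⟩).trans_le (hLA (u, φ u) ⟨hu, le_rfl⟩)
  set ψ := L.comp (ContinuousLinearMap.inl ℝ E ℝ)
  set β := L (0, 1)
  have hL : ∀ v t, L (v, t) = ψ v + t * β := fun v t => by
    rw [show ((v, t) : E × ℝ) = (v, 0) + t • (0, 1) by simp, map_add, map_smul, smul_eq_mul]
    rfl
  have hβ : 0 < β := by
    have := key y (φ y - 1) (by simp [cone]) y hy
    rw [hL, hL] at this
    linarith
  set g : E →L[ℝ] ℝ := (-β⁻¹) • ψ
  have hg : ∀ v, ψ v = -β * g v := fun v => by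
    rw [smul_apply, smul_eq_mul]
    field_simp
  have hsep : ∀ v, ∀ u ∈ s, cone v - g v ≤ φ u - g u := fun v u hu =>
    le_of_forall_lt fun t ht => by
      have := key v (t + g v) (by linarith) u hu
      rw [hL, hL, hg, hg] at this
      nlinarith
  refine ⟨g, g.opNorm_le_bound hμ fun w => abs_le.2 ⟨?_, ?_⟩, fun u hu => ?_⟩
  · have := hsep (y + w) y hy
    simp only [cone, map_add, dist_self_add_left] at this
    linarith
  · have := hsep (y - w) y hy
    simp only [cone, map_sub, dist_self_sub_left] at this
    linarith
  · have := hsep y u hu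
    simp only [cone, dist_self, mul_zero, sub_zero, map_sub] at this ⊢
    linarith

theorem ConvexOn.le_add_mul_dist_of_le_max (hφ : ConvexOn ℝ s φ) (hy : y ∈ s)
    (hpos : 0 < φ y) (hmin : ∀ u ∈ s, φ y ≤ max (φ u) 0 + μ * dist u y) :
    ∀ u ∈ s, φ y ≤ φ u + μ * dist u y := by
  intro u hu
  rcases le_total 0 (φ u) with hu0 | hu0
  · simpa [max_eq_left hu0] using hmin u hu
  -- The chord from `y` to `u` leaves `{φ > 0}` at the parameter `t`.
  have hgap : 0 < φ y - φ u := by linarith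
  set t := φ y / (φ y - φ u)
  have ht0 : 0 < t := div_pos hpos hgap
  have ht1 : t ≤ 1 := (div_le_one hgap).2 (by linarith)
  have hw := hφ.2 hu hy ht0.le (sub_nonneg.2 ht1) (add_sub_cancel t 1)
  have hwφ : t • φ u + (1 - t) • φ y = 0 := by
    simp only [smul_eq_mul, t]
    field_simp
    ring
  have hdist : dist (t • u + (1 - t) • y) y = t * dist u y := by
    rw [dist_eq_norm, dist_eq_norm, show t • u + (1 - t) • y - y = t • (u - y) by module,
      norm_smul, Real.norm_of_nonneg ht0.le]
  have := hmin _ (hφ.1 hu hy ht0.le (sub_nonneg.2 ht1) (add_sub_cancel t 1))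
  rw [max_eq_right (hw.trans hwφ.le), hdist, zero_add] at this
  have hyt : φ y = t * (φ y - φ u) := by
    simp only [t]
    field_simp
  nlinarith

end ConvexOn

section EConvexOn

variable {X : Type*} [NormedAddCommGroup X] [NormedSpace ℝ X] {f : X → EReal}

theorem EConvexOn.convexOn_toReal (hbot : ∀ u, f u ≠ ⊥) (hf : EConvexOn f) :
    ConvexOn ℝ {u | f u ≠ ⊤} fun u => (f u).toReal := by
  have hle : ∀ u ∈ {u | f u ≠ ⊤}, ∀ v ∈ {u | f u ≠ ⊤}, ∀ a : ℝ, 0 ≤ a → a ≤ 1 →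
      f (a • u + (1 - a) • v) ≤ ((a * (f u).toReal + (1 - a) * (f v).toReal : ℝ) : EReal) := by
    intro u hu v hv a ha ha1
    have := hf u v a ha ha1
    rwa [← EReal.coe_toReal hu (hbot u), ← EReal.coe_toReal hv (hbot v), ← EReal.coe_mul,
      ← EReal.coe_mul, ← EReal.coe_add] at this
  refine ⟨fun u hu v hv a b ha hb hab => ?_, fun u hu v hv a b ha hb hab => ?_⟩ <;>
    obtain rfl : b = 1 - a := by linarith
  · exact ne_top_of_le_ne_top (EReal.coe_ne_top _) (hle u hu v hv a ha (by linarith))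
  · exact (EReal.toReal_le_toReal (hle u hu v hv a ha (by linarith)) (hbot _)
      (EReal.coe_ne_top _)).trans_eq (EReal.toReal_coe _)

theorem EConvexOn.dSub_le (hbot : ∀ u, f u ≠ ⊥) (hf : EConvexOn f) {y : X} (hy : f y ≠ ⊤)
    (hpos : 0 < f y) {c : ℝ≥0∞} (hc : c ≠ ⊤)
    (hmin : ∀ u, (f y).toENNReal ≤ (f u).toENNReal + c * edist u y) : dSub f y ≤ c := by
  have hcoe : ∀ u, f u ≠ ⊤ → f u = (f u).toReal := fun u hu =>
    (EReal.coe_toReal hu (hbot u)).symm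
  have hmin' : ∀ u ∈ {u | f u ≠ ⊤},
      (f y).toReal ≤ max (f u).toReal 0 + c.toReal * dist u y := by
    intro u hu
    have hmax : ENNReal.ofReal (f u).toReal = ENNReal.ofReal (max (f u).toReal 0) := by simp
    have := hmin u
    rwa [hcoe y hy, hcoe u hu, EReal.real_coe_toENNReal, EReal.real_coe_toENNReal, edist_dist,
      ← ENNReal.ofReal_toReal hc, ← ENNReal.ofReal_mul ENNReal.toReal_nonneg, hmax,
      ← ENNReal.ofReal_add (le_max_right _ _) (by positivity),
      ENNReal.ofReal_le_ofReal_iff (by positivity)] at this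
  have hφ := hf.convexOn_toReal hbot
  obtain ⟨g, hg, hsub⟩ := hφ.exists_clm_norm_le_of_le_add_mul_dist hy ENNReal.toReal_nonneg
    (hφ.le_add_mul_dist_of_le_max hy (EReal.toReal_pos hpos hy) hmin')
  refine (iInf₂_le g fun u => ?_).trans
    ((ENNReal.ofReal_le_ofReal hg).trans_eq (ENNReal.ofReal_toReal hc))
  by_cases hu : f u = ⊤
  · rw [hu, hcoe y hy, EReal.top_sub_coe]
    exact le_top
  · rw [hcoe u hu, hcoe y hy, ← EReal.coe_sub, EReal.coe_le_coe_iff]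
    exact hsub u hu

end EConvexOn

theorem stmt_17_general {X : Type*} [NormedAddCommGroup X] [NormedSpace ℝ X] [CompleteSpace X]
    (f : X → EReal) (hbot : ∀ u, f u ≠ ⊥) (hconv : EConvexOn f)
    (hlsc : LowerSemicontinuous f)
    (xbar : X) (hxbar : f xbar ≤ 0) (τ : ℝ)
    (δ : ℝ≥0∞)
    (h : ∀ x : X, edist x xbar < δ → 0 < f x →
      f x < ((ENNReal.ofReal τ * EMetric.infEdist x {v | f v ≤ 0} : ℝ≥0∞) : EReal) →
      ENNReal.ofReal τ ≤ dSub f x) :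
    ∀ α : ℝ, 0 < α → α ≤ 1 → ∀ x : X,
      edist x xbar < δ / (1 + ENNReal.ofReal α) →
      ENNReal.ofReal (α * τ) * EMetric.infEdist x {v | f v ≤ 0} ≤ (f x).toENN := by
  intro α hα hα1 x hx
  set S := {v : X | f v ≤ 0}
  set G := fun u => (f u).toENNReal
  set D := infEDist x S
  -- `EReal.toENN` is definitionally Mathlib's `EReal.toENNReal`.
  change ENNReal.ofReal (α * τ) * D ≤ G x
  by_contra! hlt
  rw [ENNReal.ofReal_mul hα.le, mul_comm (ENNReal.ofReal α), mul_assoc] at hlt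
  have hDx : D ≤ edist x xbar := infEDist_le_edist_of_mem hxbar
  obtain ⟨c, hcτ, hGc⟩ := ENNReal.exists_lt_and_lt_mul hlt (fun h0 => by simp [h0] at hlt)
    (ENNReal.mul_ne_top ENNReal.ofReal_ne_top (ne_top_of_le_ne_top hx.ne_top hDx))
  have hc0 : c ≠ 0 := fun h0 => by simp [h0] at hGc
  have hc : c ≠ ⊤ := ne_top_of_lt hcτ
  obtain ⟨y, hyx, hymin⟩ := (EReal.continuous_toENNReal.comp_lowerSemicontinuous hlsc
    fun _ _ => EReal.toENNReal_le_toENNReal).ekeland (ne_top_of_lt hlt) hc0 hc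
  have hyx_lt : edist y x < ENNReal.ofReal α * D :=
    (ENNReal.mul_lt_mul_iff_right hc0 hc).1 ((le_add_self.trans hyx).trans_lt hGc)
  have hyball : edist y xbar < δ := calc
    edist y xbar ≤ edist y x + edist x xbar := edist_triangle _ _ _
    _ ≤ ENNReal.ofReal α * edist x xbar + edist x xbar :=
      by gcongr; exact hyx_lt.le.trans (by gcongr)
    _ = (1 + ENNReal.ofReal α) * edist x xbar := by ring
    _ < δ := ENNReal.mul_lt_of_lt_div' hx
  have hαD : ENNReal.ofReal α * D ≤ D :=
    mul_le_of_le_one_left zero_le (ENNReal.ofReal_le_one.2 hα1)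
  have hGy : G y < ENNReal.ofReal τ * infEDist y S :=
    (lt_mul_infEDist_of_add_mul_edist_le hyx (hGc.trans_le (by gcongr))).trans_le (by gcongr)
  have hfy : 0 < f y := by
    by_contra! hfy
    simp [infEDist_zero_of_mem (show y ∈ S from hfy)] at hGy
  have hτy := h y hyball hfy (by rw [← EReal.coe_toENNReal hfy.le]; exact_mod_cast hGy)
  exact (hcτ.trans_le (hτy.trans (hconv.dSub_le hbot
    (EReal.toENNReal_ne_top_iff.1 (ne_top_of_lt hGy)) hfy hc hymin))).false

/-- convex case of Theorem 3.2: if `d(0,∂f(x)) ≥ τ` for all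
`x ∈ B_δ(x̄)` with `f(x) > 0` and `f(x) < τ d(x,[f≤0])`, then for every
`α ∈ (0,1]` and `x ∈ B_{δ/(1+α)}(x̄)`, `α τ d(x,[f≤0]) ≤ f₊(x)`.
Here `δ ∈ (0,∞]`. -/
theorem stmt_17 {X : Type*} [NormedAddCommGroup X] [NormedSpace ℝ X] [CompleteSpace X]
    (f : X → EReal) (hbot : ∀ u, f u ≠ ⊥) (hconv : EConvexOn f)
    (hlsc : LowerSemicontinuous f)
    (xbar : X) (hxbar : f xbar ≤ 0) (τ : ℝ) (hτ : 0 < τ)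
    (δ : ℝ≥0∞) (hδ : 0 < δ)
    (h : ∀ x : X, edist x xbar < δ → 0 < f x →
      f x < ((ENNReal.ofReal τ * EMetric.infEdist x {v | f v ≤ 0} : ℝ≥0∞) : EReal) →
      ENNReal.ofReal τ ≤ dSub f x) :
    ∀ α : ℝ, 0 < α → α ≤ 1 → ∀ x : X,
      edist x xbar < δ / (1 + ENNReal.ofReal α) →
      ENNReal.ofReal (α * τ) * EMetric.infEdist x {v | f v ≤ 0} ≤ (f x).toENN :=
  stmt_17_general f hbot hconv hlsc xbar hxbar τ δ h
end
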